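/- Let C ∈ {B,W}, r ∈ ℕ, and let v̂, û be nodes of the induced subgraph Ĥ_{C,d} of H_{C,d}. If the nodes g_C(v̂) and g_C(û) of G_d are r-SV-bisimilar (with trivial input and generalised port numbering p_d) and f_C(v̂) = f_C(û), then v̂ and û are r-SV-bisimilar in (Ĥ_{C,d}, f_C, p_C). -/

import Mathlib

/-!
In `Ĥ_{C,d}` the colours are forced by depth: odd depth carries `C`, even depth is grey, and
the `C̄`-coloured children of rule (H6) are cut off. So `g_C` is a bijection from `Ĥ_{C,d}` onto
`V_d`, inverted by `colorize C`; it preserves adjacency, hence degrees, and a port `a` of `p_d`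
towards `v` becomes the port `(a, f_C v)` of `p_C`. Nodes of equal colour have depths of equal
parity, and so do their matched neighbours, so bisimilarity transfers by induction on `r`.
-/

namespace Paper

/-- The degree of a vertex: the number of its neighbours. -/
noncomputable def deg {V : Type} (G : SimpleGraph V) (v : V) : ℕ :=
  {u | G.Adj v u}.ncard

/-- A port numbering of a graph, modelled as a partial map sending each
output port `(v, i)` with `1 ≤ i ≤ deg v` to an input port `(u, j)` of an
adjacent node `u`, bijectively, such that there is a port between `v` and `u`
if and only if they are adjacent. -/
structure IsPortNumbering {V : Type} (G : SimpleGraph V)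
    (pn : V → ℕ → Option (V × ℕ)) : Prop where
  dom : ∀ v i, (pn v i).isSome ↔ 1 ≤ i ∧ i ≤ deg G v
  adj : ∀ v i u j, pn v i = some (u, j) → G.Adj v u ∧ 1 ≤ j ∧ j ≤ deg G u
  bij : ∀ u j, 1 ≤ j → j ≤ deg G u → ∃! vi : V × ℕ, pn vi.1 vi.2 = some (u, j)
  edge : ∀ v u, G.Adj v u ↔ ∃ i j, pn v i = some (u, j)

/-- A generalised port numbering with port numbers from an arbitrary set `N`:
each node `v` has a set of `deg v` output port numbers (those `o` with
`pn v o ≠ none`) and a set of `deg v` input port numbers (those `i` received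
from some output port), and `pn` is a bijection from output ports to input
ports of adjacent nodes. -/
structure IsGenPortNumbering {V N : Type} (G : SimpleGraph V)
    (pn : V → N → Option (V × N)) : Prop where
  adj : ∀ v o u i, pn v o = some (u, i) → G.Adj v u
  edge : ∀ v u, G.Adj v u → ∃ o i, pn v o = some (u, i)
  inj : ∀ v o v' o' u i, pn v o = some (u, i) → pn v' o' = some (u, i) →
    v = v' ∧ o = o'
  out_card : ∀ v, {o | (pn v o).isSome}.ncard = deg G v
  in_card : ∀ u, {i | ∃ v o, pn v o = some (u, i)}.ncard = deg G u

/-- `r`-SV-bisimilarity of `(G, f, v, p)` and `(G', f', v', p')`. -/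
def SVBisim {V V' X N : Type} (G : SimpleGraph V) (G' : SimpleGraph V')
    (f : V → X) (f' : V' → X)
    (p : V → N → Option (V × N)) (p' : V' → N → Option (V' × N)) :
    ℕ → V → V' → Prop
  | 0, v, v' => deg G v = deg G' v' ∧ f v = f' v'
  | r + 1, v, v' =>
      (deg G v = deg G' v' ∧ f v = f' v') ∧
      (∀ w, G.Adj v w → ∃ w', G'.Adj v' w' ∧
        SVBisim G G' f f' p p' r w w' ∧
        ∃ a b c, p w a = some (v, b) ∧ p' w' a = some (v', c)) ∧
      (∀ w', G'.Adj v' w' → ∃ w, G.Adj v w ∧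
        SVBisim G G' f f' p p' r w w' ∧
        ∃ a b c, p w a = some (v, b) ∧ p' w' a = some (v', c))

/-- Nodes of the tree `G_d` are finite sequences of pairs of numbers.
We represent a sequence `(a₁, …, a_i)` as the list `[a_i, …, a₁]`, i.e. in
reverse order, so that consing corresponds to appending a pair at the end. -/
abbrev Nd : Type := ℕ × ℕ

/-- `b₂⁺`: `1` if `b₂ = 0`, and `b₂` otherwise. -/
def bplus (b : ℕ) : ℕ := if b = 0 then 1 else b

/-- For `j ≥ 1`, the `j`-th smallest element of `{lo, lo+1, lo+2, …} \ {f}`.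
This realises the greedy choices `c^j = min({lo,…} \ {f, c¹, …, c^{j-1}})`. -/
def nthAvoid (lo f j : ℕ) : ℕ :=
  if lo + j - 1 < f ∨ f < lo then lo + j - 1 else lo + j

/-- The node set `V_d` of the graph `G_d`, given by the rules (G1)–(G4).
(Sequences are represented as reversed lists, the head being the last pair
`a_i` of the sequence.) -/
inductive Vd (d : ℕ) : List Nd → Prop
  /-- (G1): the empty sequence is a node. -/
  | nil : Vd d []
  /-- (G2): the sequences `((1,0)), ((2,1)), …, ((d,d−1))` are nodes. -/
  | base (k : ℕ) (h1 : 1 ≤ k) (h2 : k ≤ d) : Vd d [(k, k - 1)]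
  /-- (G3): children of a node of odd length `< 2d` with last pair `(b₁, b₂)`:
  for `j = 1, …, d−1` append `(c₁ʲ, c₂ʲ)` where `c₁ʲ` is the `j`-th smallest
  element of `{1,…,d} \ {b₂⁺}` and `c₂ʲ` the `j`-th smallest of `{1,…,d} \ {b₁}`. -/
  | odd (b₁ b₂ : ℕ) (rest : List Nd)
      (hv : Vd d ((b₁, b₂) :: rest))
      (hodd : Odd ((b₁, b₂) :: rest).length)
      (hlt : ((b₁, b₂) :: rest).length < 2 * d)
      (j : ℕ) (hj1 : 1 ≤ j) (hj2 : j ≤ d - 1) :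
      Vd d ((nthAvoid 1 (bplus b₂) j, nthAvoid 1 b₁ j) :: (b₁, b₂) :: rest)
  /-- (G4): children of a node of even positive length `< 2d` with last pair
  `(b₁, b₂)`: for `j = 1, …, d−1` append `(c₁ʲ, c₂ʲ)` where `c₁ʲ` is the `j`-th
  smallest element of `{1,…,d} \ {b₂}` and `c₂ʲ` the `j`-th smallest of
  `{0,…,d−1} \ {b₁}`. -/
  | even (b₁ b₂ : ℕ) (rest : List Nd)
      (hv : Vd d ((b₁, b₂) :: rest))
      (heven : Even ((b₁, b₂) :: rest).length)
      (hlt : ((b₁, b₂) :: rest).length < 2 * d)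
      (j : ℕ) (hj1 : 1 ≤ j) (hj2 : j ≤ d - 1) :
      Vd d ((nthAvoid 1 b₂ j, nthAvoid 0 b₁ j) :: (b₁, b₂) :: rest)

/-- The edge relation of `G_d`: `u` is a child of `v` or vice versa. -/
def Ed (d : ℕ) (v u : List Nd) : Prop :=
  Vd d v ∧ Vd d u ∧ ∃ a : Nd, u = a :: v ∨ v = a :: u

/-- The outgoing port number `π_d(v, u)` from `v` towards an adjacent node `u`:
if `u = (b₁, b₂) :: v` is a child of `v` then `b₁`, and if `v = (b₁, b₂) :: u`
is a child of `u` then `b₂`. -/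
def outPort (v u : List Nd) : ℕ :=
  if u.length = v.length + 1 then u.headI.1 else v.headI.2

/-- A pair of compatible walks (PCW) of length `k` in `G_d`:
two walks starting at `((1,0))` and `((2,1))` such that the outgoing port
numbers backwards along the walks coincide. -/
structure IsPCW (d k : ℕ) (w₁ w₂ : ℕ → List Nd) : Prop where
  klen : k ≤ 2 * d - 3
  walk₁ : ∀ j < k, Ed d (w₁ j) (w₁ (j + 1))
  walk₂ : ∀ j < k, Ed d (w₂ j) (w₂ (j + 1))
  start₁ : w₁ 0 = [(1, 0)]
  start₂ : w₂ 0 = [(2, 1)]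
  compat : ∀ j, 1 ≤ j → j ≤ k →
    outPort (w₁ j) (w₁ (j - 1)) = outPort (w₂ j) (w₂ (j - 1))

/-- A pair of separating walks (PSW): a PCW such that the last node of the
first walk has a neighbour whose outgoing port number towards it is matched
by no neighbour of the last node of the second walk. -/
structure IsPSW (d k : ℕ) (w₁ w₂ : ℕ → List Nd)
    extends IsPCW d k w₁ w₂ : Prop where
  sep : ∃ x, Ed d (w₁ k) x ∧
    ∀ y, Ed d (w₂ k) y → outPort x (w₁ k) ≠ outPort y (w₂ k)

/-- A PSW of length `k` in `G_d` is critical if there is no strictly shorter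
PSW in `G_d`. -/
def IsCriticalPSW (d k : ℕ) (w₁ w₂ : ℕ → List Nd) : Prop :=
  IsPSW d k w₁ w₂ ∧ ∀ k' w₁' w₂', IsPSW d k' w₁' w₂' → k ≤ k'

/-- The graph `G_d` as a simple graph on all lists of pairs (the vertices
outside `V_d` are isolated). -/
def GdGraph (d : ℕ) : SimpleGraph (List Nd) where
  Adj v u := Ed d v u
  symm := by
    constructor
    rintro v u ⟨hv, hu, a, h⟩
    exact ⟨hu, hv, a, h.symm⟩
  loopless := by
    constructor
    rintro v ⟨-, -, a, h | h⟩ <;>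
      exact absurd (congrArg List.length h) (by simp)

open Classical in
/-- The generalised port numbering `p_d` of `G_d`: for a node `v` with child
`u = (b₁, b₂) :: v`, we have `p_d (v, b₁) = (u, b₂)` and `p_d (u, b₂) = (v, b₁)`. -/
noncomputable def pd (d : ℕ) (v : List Nd) (n : ℕ) : Option (List Nd × ℕ) :=
  if h : ∃ c₂ : ℕ, Vd d ((n, c₂) :: v) then
    some ((n, h.choose) :: v, h.choose)
  else
    match v with
    | (b₁, b₂) :: w =>
        if b₂ = n ∧ Vd d ((b₁, b₂) :: w) then some (w, b₁) else none
    | [] => none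

/-- The three colours: black, white, grey. -/
inductive Col : Type
  | B | W | G
deriving DecidableEq

/-- The complementary colour: `B̄ = W`, `W̄ = B` (grey is left untouched). -/
def Col.flip : Col → Col
  | Col.B => Col.W
  | Col.W => Col.B
  | Col.G => Col.G


/-- Nodes of the trees `H_{C,d}` are finite sequences of triples
(number, number, colour), represented as reversed lists. -/
abbrev Nd3 : Type := ℕ × ℕ × Col

/-- The colouring `f_C`: the root gets grey, any other node the colour
component of its last triple. -/
def fH : List Nd3 → Col
  | [] => Col.G
  | (_, _, c) :: _ => c

/-- The node set `V_{C,d}` of the graph `H_{C,d}`, given by rules (H1)–(H6). -/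
inductive VH (C : Col) (d : ℕ) : List Nd3 → Prop
  /-- (H1): the empty sequence is a node. -/
  | nil : VH C d []
  /-- (H2): the sequences `((1,0,C)), ((2,1,C)), …, ((d,d−1,C))`. -/
  | base (k : ℕ) (h1 : 1 ≤ k) (h2 : k ≤ d) : VH C d [(k, k - 1, C)]
  /-- (H3): the sequences `((2,1,C̄)), …, ((d,d−1,C̄))`. -/
  | base' (k : ℕ) (h1 : 2 ≤ k) (h2 : k ≤ d) : VH C d [(k, k - 1, Col.flip C)]
  /-- (H4): grey children of a node of odd length `< 2d` with last triple
  `(b₁, b₂, c)`, `c ∈ {B, W}`. -/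
  | odd (b₁ b₂ : ℕ) (c : Col) (rest : List Nd3)
      (hc : c ≠ Col.G)
      (hv : VH C d ((b₁, b₂, c) :: rest))
      (hodd : Odd ((b₁, b₂, c) :: rest).length)
      (hlt : ((b₁, b₂, c) :: rest).length < 2 * d)
      (j : ℕ) (hj1 : 1 ≤ j) (hj2 : j ≤ d - 1) :
      VH C d ((nthAvoid 1 (bplus b₂) j, nthAvoid 1 b₁ j, Col.G) ::
        (b₁, b₂, c) :: rest)
  /-- (H5): children of colour `c` of a grey node of even positive length
  `< 2d` with last triple `(b₁, b₂, G)` and previous triple `(d₁, d₂, c)`,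
  `c ∈ {B, W}`. -/
  | evenSame (b₁ b₂ d₁ d₂ : ℕ) (c : Col) (rest : List Nd3)
      (hc : c ≠ Col.G)
      (hv : VH C d ((b₁, b₂, Col.G) :: (d₁, d₂, c) :: rest))
      (heven : Even ((b₁, b₂, Col.G) :: (d₁, d₂, c) :: rest).length)
      (hlt : ((b₁, b₂, Col.G) :: (d₁, d₂, c) :: rest).length < 2 * d)
      (j : ℕ) (hj1 : 1 ≤ j) (hj2 : j ≤ d - 1) :
      VH C d ((nthAvoid 1 b₂ j, nthAvoid 0 b₁ j, c) ::
        (b₁, b₂, Col.G) :: (d₁, d₂, c) :: rest)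
  /-- (H6): children of colour `c̄` of a grey node of even positive length
  `< 2d` with previous triple `(d₁, d₂, c)`, `c ∈ {B, W}`; here
  `c₁ʲ = min({2,…,d} \ {c₁¹,…}) = j + 1` and `c₂ʲ = min({1,…,d−1} \ {c₂¹,…}) = j`. -/
  | evenFlip (b₁ b₂ d₁ d₂ : ℕ) (c : Col) (rest : List Nd3)
      (hc : c ≠ Col.G)
      (hv : VH C d ((b₁, b₂, Col.G) :: (d₁, d₂, c) :: rest))
      (heven : Even ((b₁, b₂, Col.G) :: (d₁, d₂, c) :: rest).length)
      (hlt : ((b₁, b₂, Col.G) :: (d₁, d₂, c) :: rest).length < 2 * d)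
      (j : ℕ) (hj1 : 1 ≤ j) (hj2 : j ≤ d - 1) :
      VH C d ((j + 1, j, Col.flip c) ::
        (b₁, b₂, Col.G) :: (d₁, d₂, c) :: rest)

/-- The edge relation of `H_{C,d}`. -/
def EH (C : Col) (d : ℕ) (v u : List Nd3) : Prop :=
  VH C d v ∧ VH C d u ∧ ∃ a : Nd3, u = a :: v ∨ v = a :: u

/-- The graph `H_{C,d}` as a simple graph on all lists of triples. -/
def HGraph (C : Col) (d : ℕ) : SimpleGraph (List Nd3) where
  Adj v u := EH C d v u
  symm := by
    constructor
    rintro v u ⟨hv, hu, a, h⟩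
    exact ⟨hu, hv, a, h.symm⟩
  loopless := by
    constructor
    rintro v ⟨-, -, a, h | h⟩ <;>
      exact absurd (congrArg List.length h) (by simp)

/-- Membership in the induced subgraph `Ĥ_{C,d}`: every prefix of the
sequence (i.e. every suffix of the reversed list) is grey or of colour `C`. -/
def inHat (C : Col) (v : List Nd3) : Prop :=
  ∀ s : List Nd3, s <:+ v → (fH s = C ∨ fH s = Col.G)

/-- The induced subgraph `Ĥ_{C,d}` of `H_{C,d}`. -/
def HhatGraph (C : Col) (d : ℕ) : SimpleGraph (List Nd3) where
  Adj v u := EH C d v u ∧ inHat C v ∧ inHat C u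
  symm := by
    constructor
    rintro v u ⟨⟨hv, hu, a, h⟩, h1, h2⟩
    exact ⟨⟨hu, hv, a, h.symm⟩, h2, h1⟩
  loopless := by
    constructor
    rintro v ⟨⟨-, -, a, h | h⟩, -, -⟩ <;>
      exact absurd (congrArg List.length h) (by simp)

open Classical in
/-- The generalised port numbering `p_C` of `H_{C,d}`, with port numbers that
are pairs (number, colour): along the edge between a node and its child, each
of the two outgoing port labels consists of the corresponding number of the
child's last triple together with the colour of the node at the other end. -/
noncomputable def pH (C : Col) (d : ℕ) (v : List Nd3) (q : ℕ × Col) :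
    Option (List Nd3 × (ℕ × Col)) :=
  if h : ∃ c₂ : ℕ, VH C d ((q.1, c₂, q.2) :: v) then
    some ((q.1, h.choose, q.2) :: v, (h.choose, fH v))
  else
    match v with
    | (b₁, b₂, cv) :: w =>
        if q = (b₂, fH w) ∧ VH C d ((b₁, b₂, cv) :: w) then
          some (w, (b₁, cv))
        else none
    | [] => none

open Classical in
/-- The restriction of the generalised port numbering `p_C` to the induced
subgraph `Ĥ_{C,d}`. -/
noncomputable def pHhat (C : Col) (d : ℕ) (v : List Nd3) (q : ℕ × Col) :
    Option (List Nd3 × (ℕ × Col)) :=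
  match pH C d v q with
  | some (u, a) => if inHat C v ∧ inHat C u then some (u, a) else none
  | none => none

/-- The isomorphism `g_C` from `Ĥ_{C,d}` to `G_d`: forget the colours. -/
def gC (v : List Nd3) : List Nd := v.map (fun t => (t.1, t.2.1))

lemma nthAvoid_ne {lo f j : ℕ} (hj : 1 ≤ j) : nthAvoid lo f j ≠ f := by
  unfold nthAvoid; split <;> omega

lemma nthAvoid_bplus_ne {lo b j : ℕ} (hlo : 1 ≤ lo) (hj : 1 ≤ j) :
    nthAvoid lo (bplus b) j ≠ b := by
  unfold nthAvoid bplus; split_ifs <;> omega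

lemma nthAvoid_injective {lo f : ℕ} (hlo : 1 ≤ lo) : Function.Injective (nthAvoid lo f) := by
  intro j j' h; unfold nthAvoid at h; split_ifs at h <;> omega

lemma Col.flip_ne_self {c : Col} (hc : c ≠ Col.G) : c.flip ≠ c := by
  cases c <;> simp_all [Col.flip]

lemma Col.flip_ne_G {c : Col} (hc : c ≠ Col.G) : c.flip ≠ Col.G := by
  cases c <;> simp_all [Col.flip]

lemma exists_cons_map {α β : Type*} (f : α → β) {u v : List α}
    (h : ∃ a, u = a :: v ∨ v = a :: u) :
    ∃ b, u.map f = b :: v.map f ∨ v.map f = b :: u.map f := by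
  obtain ⟨a, rfl | rfl⟩ := h
  exacts [⟨f a, Or.inl rfl⟩, ⟨f a, Or.inr rfl⟩]

lemma even_length_iff_of_cons {α : Type*} {u v : List α}
    (h : ∃ a, u = a :: v ∨ v = a :: u) : Even u.length ↔ ¬Even v.length := by
  obtain ⟨a, rfl | rfl⟩ := h <;> simp [Nat.even_add_one]

/-- The inverse of `g_C` on `Ĥ_{C,d}`. -/
def colorize (C : Col) : List Nd → List Nd3
  | [] => []
  | (a₁, a₂) :: l => (a₁, a₂, if Even l.length then C else Col.G) :: colorize C l

@[simp]
lemma gC_nil : gC [] = [] := rfl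

@[simp]
lemma gC_cons (a : Nd3) (l : List Nd3) : gC (a :: l) = (a.1, a.2.1) :: gC l := rfl

@[simp]
lemma length_gC (v : List Nd3) : (gC v).length = v.length := List.length_map _

@[simp]
lemma gC_colorize (C : Col) (x : List Nd) : gC (colorize C x) = x := by
  induction x with
  | nil => rfl
  | cons a l ih => simp [colorize, ih]

@[simp]
lemma length_colorize (C : Col) (x : List Nd) : (colorize C x).length = x.length := by
  rw [← length_gC, gC_colorize]

lemma colorize_injective (C : Col) : Function.Injective (colorize C) :=
  Function.LeftInverse.injective (gC_colorize C)

lemma inHat_nil (C : Col) : inHat C [] := by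
  intro s hs
  rw [List.suffix_nil.mp hs]
  exact Or.inr rfl

lemma inHat_cons_iff {C : Col} {a : Nd3} {l : List Nd3} :
    inHat C (a :: l) ↔ (a.2.2 = C ∨ a.2.2 = Col.G) ∧ inHat C l := by
  refine ⟨fun h => ⟨h _ List.suffix_rfl, fun s hs => h s (hs.trans (List.suffix_cons a l))⟩,
    fun ⟨ha, hl⟩ s hs => ?_⟩
  rcases List.suffix_cons_iff.mp hs with rfl | hs
  exacts [ha, hl s hs]

lemma inHat_colorize (C : Col) (x : List Nd) : inHat C (colorize C x) := by
  induction x with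
  | nil => exact inHat_nil C
  | cons a l ih =>
    refine inHat_cons_iff.2 ⟨?_, ih⟩
    split_ifs <;> simp

section Hat

variable {C : Col} {d : ℕ}

/-- The nodes of `Ĥ_{C,d}`. -/
def IsHatNode (C : Col) (d : ℕ) (v : List Nd3) : Prop :=
  VH C d v ∧ inHat C v

lemma IsHatNode.tail {a : Nd3} {l : List Nd3} (h : IsHatNode C d (a :: l)) :
    IsHatNode C d l := by
  refine ⟨?_, (inHat_cons_iff.1 h.2).2⟩
  cases h.1 <;> first | exact VH.nil | assumption

lemma hhatAdj_iff {v w : List Nd3} :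
    (HhatGraph C d).Adj v w ↔
      IsHatNode C d v ∧ IsHatNode C d w ∧ ∃ a, w = a :: v ∨ v = a :: w :=
  ⟨fun ⟨⟨hv, hw, h⟩, hvhat, hwhat⟩ => ⟨⟨hv, hvhat⟩, ⟨hw, hwhat⟩, h⟩,
    fun ⟨⟨hv, hvhat⟩, ⟨hw, hwhat⟩, h⟩ => ⟨⟨hv, hw, h⟩, hvhat, hwhat⟩⟩

lemma VH.fH_eq_G_iff (hC : C ≠ Col.G) {v : List Nd3} (hv : VH C d v) :
    fH v = Col.G ↔ Even v.length := by
  cases hv <;> simp_all [fH, Nat.even_add_one, Col.flip_ne_G]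

lemma IsHatNode.fH_eq (hC : C ≠ Col.G) {v : List Nd3} (hv : IsHatNode C d v) :
    fH v = if Even v.length then Col.G else C := by
  have hG := hv.1.fH_eq_G_iff hC
  split_ifs with he
  · exact hG.2 he
  · have : fH v = C ∨ fH v = Col.G := hv.2 v List.suffix_rfl
    tauto

lemma IsHatNode.colorize_gC (hC : C ≠ Col.G) {v : List Nd3} (hv : IsHatNode C d v) :
    colorize C (gC v) = v := by
  induction v with
  | nil => rfl
  | cons a l ih =>
    obtain ⟨a₁, a₂, c⟩ := a
    have hc := hv.fH_eq hC
    simp only [fH, List.length_cons, Nat.even_add_one, ite_not] at hc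
    simp [colorize, ih hv.tail, hc]

lemma IsHatNode.vd_gC {v : List Nd3} (hv : IsHatNode C d v) : Vd d (gC v) := by
  obtain ⟨hv, hhat⟩ := hv
  induction hv with
  | nil => exact Vd.nil
  | base k h1 h2 => exact Vd.base k h1 h2
  | base' k h1 h2 => exact Vd.base k (by omega) h2
  | odd b₁ b₂ c rest hc hv hodd hlt j hj1 hj2 ih =>
    simpa using Vd.odd b₁ b₂ (gC rest) (by simpa using ih (inHat_cons_iff.1 hhat).2)
      (by simpa using hodd) (by simpa using hlt) j hj1 hj2
  | evenSame b₁ b₂ d₁ d₂ c rest hc hv heven hlt j hj1 hj2 ih =>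
    simpa using Vd.even b₁ b₂ ((d₁, d₂) :: gC rest)
      (by simpa using ih (inHat_cons_iff.1 hhat).2)
      (by simpa using heven) (by simpa using hlt) j hj1 hj2
  | evenFlip b₁ b₂ d₁ d₂ c rest hc hv heven hlt j hj1 hj2 ih =>
    -- the colours `c̄` of the node and `c` of its grandparent cannot both be `C`
    simp only [inHat_cons_iff] at hhat
    obtain ⟨hflip, -, hc', -⟩ := hhat
    have : c = C := hc'.resolve_right hc
    subst this
    exact (hflip.elim (Col.flip_ne_self hc) (Col.flip_ne_G hc)).elim

lemma vh_colorize (hC : C ≠ Col.G) {x : List Nd} (hx : Vd d x) : VH C d (colorize C x) := by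
  induction hx with
  | nil => exact VH.nil
  | base k h1 h2 => simpa [colorize] using VH.base k h1 h2
  | odd b₁ b₂ rest hv hodd hlt j hj1 hj2 ih =>
    have hrest : Even rest.length := by simpa [Nat.odd_add_one] using hodd
    have := VH.odd b₁ b₂ C (colorize C rest) hC (by simpa [colorize, hrest] using ih)
      (by simpa [colorize] using hodd) (by simpa [colorize] using hlt) j hj1 hj2
    simpa [colorize, hrest, Nat.even_add_one] using this
  | even b₁ b₂ rest hv heven hlt j hj1 hj2 ih =>
    cases rest with
    | nil => simp at heven
    | cons e rest =>
      obtain ⟨d₁, d₂⟩ := e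
      have hrest : Even rest.length := by simpa [Nat.even_add_one] using heven
      have := VH.evenSame b₁ b₂ d₁ d₂ C (colorize C rest) hC
        (by simpa [colorize, hrest, Nat.even_add_one] using ih)
        (by simpa [colorize] using heven) (by simpa [colorize] using hlt) j hj1 hj2
      simpa [colorize, hrest, Nat.even_add_one] using this

lemma gdAdj_gC_of_hhatAdj {v w : List Nd3} (h : (HhatGraph C d).Adj v w) :
    (GdGraph d).Adj (gC v) (gC w) := by
  obtain ⟨hv, hw, hvw⟩ := hhatAdj_iff.1 h
  exact ⟨hv.vd_gC, hw.vd_gC, exists_cons_map _ hvw⟩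

lemma IsHatNode.hhatAdj_colorize (hC : C ≠ Col.G) {v : List Nd3} (hv : IsHatNode C d v)
    {x : List Nd} (hx : (GdGraph d).Adj (gC v) x) :
    (HhatGraph C d).Adj v (colorize C x) := by
  obtain ⟨-, hxV, ⟨s₁, s₂⟩, rfl | hs⟩ := hx
  · refine hhatAdj_iff.2 ⟨hv, ⟨vh_colorize hC hxV, inHat_colorize C _⟩,
      (s₁, s₂, if Even (gC v).length then C else Col.G), Or.inl ?_⟩
    rw [colorize, hv.colorize_gC hC]
  · obtain _ | ⟨t, v'⟩ := v
    · simp at hs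
    · obtain rfl : x = gC v' := (List.cons.inj hs).2.symm
      rw [hv.tail.colorize_gC hC]
      exact hhatAdj_iff.2 ⟨hv, hv.tail, t, Or.inr rfl⟩

lemma IsHatNode.neighborSet_hhat (hC : C ≠ Col.G) {v : List Nd3} (hv : IsHatNode C d v) :
    (HhatGraph C d).neighborSet v = colorize C '' (GdGraph d).neighborSet (gC v) := by
  ext w
  refine ⟨fun hw => ⟨gC w, gdAdj_gC_of_hhatAdj hw, ?_⟩, ?_⟩
  · exact (hhatAdj_iff.1 hw).2.1.colorize_gC hC
  · rintro ⟨x, hx, rfl⟩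
    exact hv.hhatAdj_colorize hC hx

lemma IsHatNode.deg_hhat (hC : C ≠ Col.G) {v : List Nd3} (hv : IsHatNode C d v) :
    deg (HhatGraph C d) v = deg (GdGraph d) (gC v) := by
  change ((HhatGraph C d).neighborSet v).ncard = ((GdGraph d).neighborSet (gC v)).ncard
  rw [hv.neighborSet_hhat hC, Set.ncard_image_of_injective _ (colorize_injective C)]

lemma fH_of_hhatAdj (hC : C ≠ Col.G) {v w : List Nd3} (h : (HhatGraph C d).Adj v w) :
    fH w = if fH v = Col.G then C else Col.G := by
  obtain ⟨hv, hw, hvw⟩ := hhatAdj_iff.1 h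
  have hpar := even_length_iff_of_cons hvw
  rw [hv.fH_eq hC, hw.fH_eq hC]
  by_cases he : Even v.length <;> simp_all

end Hat

section Ports

variable {C : Col} {d : ℕ}

lemma pd_eq_some {x y : List Nd} {a b : ℕ} (h : pd d x a = some (y, b)) :
    y = (a, b) :: x ∨ x = (b, a) :: y := by
  unfold pd at h
  split at h
  · cases h
    exact Or.inl rfl
  · split at h
    · split at h
      · cases h
        rename_i hba
        exact Or.inr (by rw [hba.1])
      · cases h
    · cases h

lemma VH.eq_of_cons (hC : C ≠ Col.G) {a a' : Nd3} {w : List Nd3}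
    (h : VH C d (a :: w)) (h' : VH C d (a' :: w)) (h₁ : a.1 = a'.1) (h₃ : a.2.2 = a'.2.2) :
    a = a' := by
  cases h <;> cases h' <;> simp only [Prod.mk.injEq, add_left_inj] at h₁ h₃ ⊢
  all_goals first
    | contradiction
    | exact absurd h₃ (Col.flip_ne_self ‹_›)
    | exact absurd h₃.symm (Col.flip_ne_self ‹_›)
    | (obtain rfl := nthAvoid_injective le_rfl h₁; simp)
    | (subst h₁; simp)

lemma VH.not_cons_parent_port {a : Nd3} {b₁ b₂ : ℕ} {c : Col} {v : List Nd3}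
    (h : VH C d (a :: (b₁, b₂, c) :: v)) (h₁ : a.1 = b₂) (h₃ : a.2.2 = fH v) : False := by
  cases h with
  | odd _ _ _ _ _ _ _ _ j hj => exact nthAvoid_bplus_ne le_rfl hj h₁
  | evenSame _ _ _ _ _ _ _ _ _ _ j hj => exact nthAvoid_ne hj h₁
  | evenFlip _ _ _ _ _ _ hc => exact Col.flip_ne_self hc h₃

lemma pH_of_child (hC : C ≠ Col.G) {b₁ b₂ : ℕ} {c : Col} {w : List Nd3}
    (h : VH C d ((b₁, b₂, c) :: w)) :
    pH C d w (b₁, c) = some ((b₁, b₂, c) :: w, (b₂, fH w)) := by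
  have hex : ∃ c₂, VH C d ((b₁, c₂, c) :: w) := ⟨b₂, h⟩
  have hchoose : hex.choose = b₂ := by
    simpa using hex.choose_spec.eq_of_cons hC h rfl rfl
  rw [pH, dif_pos hex, hchoose]

lemma pH_of_parent {b₁ b₂ : ℕ} {c : Col} {v : List Nd3} (h : VH C d ((b₁, b₂, c) :: v)) :
    pH C d ((b₁, b₂, c) :: v) (b₂, fH v) = some (v, (b₁, c)) := by
  have hno : ¬∃ c₂, VH C d ((b₂, c₂, fH v) :: (b₁, b₂, c) :: v) :=
    fun ⟨_, h'⟩ => h'.not_cons_parent_port rfl rfl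
  rw [pH, dif_neg hno]
  exact if_pos ⟨rfl, h⟩

lemma pHhat_of_pH {v u : List Nd3} {q b : ℕ × Col} (h : pH C d v q = some (u, b))
    (hv : inHat C v) (hu : inHat C u) : pHhat C d v q = some (u, b) := by
  rw [pHhat, h]
  exact if_pos ⟨hv, hu⟩

lemma exists_pHhat_of_pd (hC : C ≠ Col.G) {v w : List Nd3} (hvw : (HhatGraph C d).Adj v w)
    {a b : ℕ} (hp : pd d (gC w) a = some (gC v, b)) :
    ∃ β, pHhat C d w (a, fH v) = some (v, β) := by
  obtain ⟨⟨hvV, hwV, ⟨b₁, b₂, c⟩, rfl | rfl⟩, hvhat, hwhat⟩ := hvw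
  · obtain rfl : a = b₂ := by
      rcases pd_eq_some hp with h | h
      · exact absurd (congrArg List.length h) (by simp; omega)
      · simp_all
    exact ⟨_, pHhat_of_pH (pH_of_parent hwV) hwhat hvhat⟩
  · obtain rfl : a = b₁ := by
      rcases pd_eq_some hp with h | h
      · simp_all
      · exact absurd (congrArg List.length h) (by simp; omega)
    exact ⟨_, pHhat_of_pH (pH_of_child hC hvV) hwhat hvhat⟩

end Ports

/-- The forth condition of the induction step; the back condition is its mirror image. -/
lemma exists_hhat_partner {C : Col} {d : ℕ} (hC : C ≠ Col.G)
    {R : List Nd → List Nd → Prop} {S : List Nd3 → List Nd3 → Prop}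
    (hRS : ∀ w w', IsHatNode C d w → IsHatNode C d w' → fH w = fH w' →
      R (gC w) (gC w') → S w w')
    {v u : List Nd3} (hu : IsHatNode C d u) (hcol : fH v = fH u)
    (hforth : ∀ x, (GdGraph d).Adj (gC v) x → ∃ x', (GdGraph d).Adj (gC u) x' ∧ R x x' ∧
      ∃ a b c, pd d x a = some (gC v, b) ∧ pd d x' a = some (gC u, c))
    {w : List Nd3} (hw : (HhatGraph C d).Adj v w) :
    ∃ w', (HhatGraph C d).Adj u w' ∧ S w w' ∧
      ∃ a b c, pHhat C d w a = some (v, b) ∧ pHhat C d w' a = some (u, c) := by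
  obtain ⟨x', hux', hR, a, b, c, hpw, hpx'⟩ := hforth (gC w) (gdAdj_gC_of_hhatAdj hw)
  have hw' := hu.hhatAdj_colorize hC hux'
  obtain ⟨β, hβ⟩ := exists_pHhat_of_pd hC hw hpw
  obtain ⟨γ, hγ⟩ := exists_pHhat_of_pd hC hw' (by rwa [gC_colorize])
  have hcol' : fH w = fH (colorize C x') := by
    rw [fH_of_hhatAdj hC hw, fH_of_hhatAdj hC hw', hcol]
  refine ⟨colorize C x', hw', hRS _ _ (hhatAdj_iff.1 hw).2.1 (hhatAdj_iff.1 hw').2.1 hcol'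
    (by rwa [gC_colorize]), (a, fH v), β, γ, hβ, by rwa [hcol]⟩

theorem bisim_Gd_to_Hhat_general (C : Col) (hC : C ≠ Col.G) (d : ℕ)
    (r : ℕ) (v u : List Nd3)
    (hv : VH C d v) (hu : VH C d u)
    (hvhat : inHat C v) (huhat : inHat C u)
    (hbisim : SVBisim (GdGraph d) (GdGraph d) (fun _ => ()) (fun _ => ())
      (pd d) (pd d) r (gC v) (gC u))
    (hcol : fH v = fH u) :
    SVBisim (HhatGraph C d) (HhatGraph C d) fH fH
      (pHhat C d) (pHhat C d) r v u := by
  have hv' : IsHatNode C d v := ⟨hv, hvhat⟩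
  have hu' : IsHatNode C d u := ⟨hu, huhat⟩
  clear hv hvhat hu huhat
  induction r generalizing v u with
  | zero => exact ⟨(hv'.deg_hhat hC).trans (hbisim.1.trans (hu'.deg_hhat hC).symm), hcol⟩
  | succ r ih =>
    obtain ⟨⟨hdeg, -⟩, hforth, hback⟩ := hbisim
    refine ⟨⟨(hv'.deg_hhat hC).trans (hdeg.trans (hu'.deg_hhat hC).symm), hcol⟩,
      fun w hw => exists_hhat_partner hC (fun w w' hw hw' hcol hR => ih w w' hR hcol hw hw')
        hu' hcol hforth hw,
      fun w' hw' => ?_⟩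
    have hback' : ∀ x, (GdGraph d).Adj (gC u) x → ∃ x', (GdGraph d).Adj (gC v) x' ∧
        SVBisim (GdGraph d) (GdGraph d) (fun _ => ()) (fun _ => ()) (pd d) (pd d) r x' x ∧
        ∃ a b c, pd d x a = some (gC u, b) ∧ pd d x' a = some (gC v, c) := fun x hx =>
      let ⟨x', hx', hR, a, b, c, h₁, h₂⟩ := hback x hx
      ⟨x', hx', hR, a, c, b, h₂, h₁⟩
    obtain ⟨w, hw, hS, a, b, c, h₁, h₂⟩ := exists_hhat_partner hC (S := flip _)
      (fun w' w hw' hw hcol' hR => ih w w' hR hcol'.symm hw hw') hv' hcol.symm hback' hw'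
    exact ⟨w, hw, hS, a, c, b, h₂, h₁⟩

/-- If the images under `g_C` of two nodes of the subgraph `Ĥ_{C,d}` are
`r`-SV-bisimilar in `G_d` (with trivial input and the generalised port
numbering `p_d`) and the nodes have the same colour, then the two nodes are
`r`-SV-bisimilar in `(Ĥ_{C,d}, f_C, p_C)`. -/
theorem bisim_Gd_to_Hhat (C : Col) (hC : C ≠ Col.G) (d : ℕ) (hd : 2 ≤ d)
    (r : ℕ) (v u : List Nd3)
    (hv : VH C d v) (hu : VH C d u)
    (hvhat : inHat C v) (huhat : inHat C u)
    (hbisim : SVBisim (GdGraph d) (GdGraph d) (fun _ => ()) (fun _ => ())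
      (pd d) (pd d) r (gC v) (gC u))
    (hcol : fH v = fH u) :
    SVBisim (HhatGraph C d) (HhatGraph C d) fH fH
      (pHhat C d) (pHhat C d) r v u :=
  bisim_Gd_to_Hhat_general C hC d r v u hv hu hvhat huhat hbisim hcol

end Paper
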